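/- Fix x, y ∈ ℂ \ {0} with x ≠ 1, y ≠ 1 and xy ≠ 1, and fix m ∈ ℤ. Then, as q tends to 0⁺ through real numbers in (0,1), δ_q(x, q^{−m}y) tends to x^m·(xy − 1)/((x − 1)(y − 1)). -/

import Mathlib

open scoped BigOperators

/-- The multiplicative Jacobi theta function, renormalized:
`φ_q(x) = (x - 1) * ∏_{n=1}^∞ (1 - qⁿx)(1 - qⁿx⁻¹)`. -/
noncomputable def phi (q x : ℂ) : ℂ :=
  (x - 1) * ∏' n : ℕ, ((1 - q ^ (n + 1) * x) * (1 - q ^ (n + 1) * x⁻¹))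

/-- Zagier's function `δ(x,y) = θ'(1)·θ(xy)/(θ(x)·θ(y))`, expressed via `φ_q`:
`δ_q(x,y) = (∏_{n=1}^∞ (1 - qⁿ)²)·φ_q(xy)/(φ_q(x)·φ_q(y))`. -/
noncomputable def del (q x y : ℂ) : ℂ :=
  (∏' n : ℕ, (1 - q ^ (n + 1)) ^ 2) * phi q (x * y) / (phi q x * phi q y)

/-! The function `φ_q` is quasi-periodic, `φ_q(qz) = -z⁻¹ φ_q(z)`, hence `δ_q(x, qy) = x⁻¹ δ_q(x, y)`
and `δ_q(x, q^{-m} y) = x^m δ_q(x, y)`. Each product `∏ (1 - qⁿ⁺¹ w)` converges locally uniformly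
near `q = 0`, so `δ_q(x, y)` is continuous in `q` at `0`, where it equals `(xy - 1)/((x - 1)(y - 1))`. -/

open Filter Topology

lemma continuousOn_tprod_one_add {ι α R : Type*} [TopologicalSpace α] [LocallyCompactSpace α]
    [NormedCommRing R] [NormOneClass R] [CompleteSpace R] {f : ι → α → R} {K : Set α}
    {u : ι → ℝ} (hK : IsOpen K) (hu : Summable u) (h : ∀ i, ∀ x ∈ K, ‖f i x‖ ≤ u i)
    (hcts : ∀ i, ContinuousOn (f i) K) :
    ContinuousOn (fun x ↦ ∏' i, (1 + f i x)) K :=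
  (hu.hasProdLocallyUniformlyOn_one_add hK (.of_forall h) hcts).continuousOn <|
    .of_forall fun s ↦ continuousOn_finsetProd s fun i _ ↦ continuousOn_const.add (hcts i)

lemma multipliable_one_sub_pow_mul {q : ℂ} (hq : ‖q‖ < 1) (w : ℂ) :
    Multipliable fun n : ℕ ↦ 1 - q ^ (n + 1) * w := by
  have hs : Summable fun n : ℕ ↦ -(q ^ (n + 1) * w) :=
    ((summable_geometric_of_norm_lt_one hq).mul_left (-(q * w))).congr fun n ↦ by ring
  simpa only [sub_eq_add_neg] using Complex.multipliable_one_add_of_summable hs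

lemma continuousAt_tprod_one_sub_pow_mul (w : ℂ) :
    ContinuousAt (fun q : ℂ ↦ ∏' n : ℕ, (1 - q ^ (n + 1) * w)) 0 := by
  simp_rw [sub_eq_add_neg]
  refine (continuousOn_tprod_one_add (K := Metric.ball 0 (1 / 2)) Metric.isOpen_ball
    (summable_geometric_two.mul_left ‖w‖) (fun n q hq ↦ ?_)
    (fun n ↦ by fun_prop)).continuousAt (Metric.ball_mem_nhds 0 one_half_pos)
  rw [mem_ball_zero_iff] at hq
  rw [norm_neg, norm_mul, norm_pow, mul_comm]
  gcongr
  calc ‖q‖ ^ (n + 1) ≤ ‖q‖ ^ n := pow_le_pow_of_le_one (norm_nonneg q) (by linarith) n.le_succ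
    _ ≤ (1 / 2) ^ n := by gcongr

lemma phi_eq_mul_tprod_mul_tprod {q : ℂ} (hq : ‖q‖ < 1) (z : ℂ) :
    phi q z = (z - 1) * ((∏' n : ℕ, (1 - q ^ (n + 1) * z)) * ∏' n : ℕ, (1 - q ^ (n + 1) * z⁻¹)) := by
  rw [phi, (multipliable_one_sub_pow_mul hq z).tprod_mul (multipliable_one_sub_pow_mul hq z⁻¹)]

lemma phi_zero_left (z : ℂ) : phi 0 z = z - 1 := by
  simp [phi]

lemma continuousAt_phi (z : ℂ) : ContinuousAt (fun q ↦ phi q z) 0 := by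
  refine ((continuousAt_const (y := z - 1)).mul ((continuousAt_tprod_one_sub_pow_mul z).mul
    (continuousAt_tprod_one_sub_pow_mul z⁻¹))).congr ?_
  filter_upwards [Metric.ball_mem_nhds (0 : ℂ) one_pos] with q hq
  exact (phi_eq_mul_tprod_mul_tprod (mem_ball_zero_iff.mp hq) z).symm

lemma tprod_one_sub_pow_mul_eq_mul_tprod {q : ℂ} (hq : ‖q‖ < 1) (w : ℂ) :
    ∏' n : ℕ, (1 - q ^ (n + 1) * w) = (1 - q * w) * ∏' n : ℕ, (1 - q ^ (n + 1) * (q * w)) := by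
  have hshift : (fun n : ℕ ↦ 1 - q ^ (n + 1 + 1) * w) = fun n ↦ 1 - q ^ (n + 1) * (q * w) := by
    funext n; ring
  rw [tprod_eq_zero_mul' (hshift ▸ multipliable_one_sub_pow_mul hq (q * w)), hshift, zero_add,
    pow_one]

lemma phi_mul_left {q z : ℂ} (hq : ‖q‖ < 1) (hq0 : q ≠ 0) (hz : z ≠ 0) :
    phi q (q * z) = -z⁻¹ * phi q z := by
  have hz' := tprod_one_sub_pow_mul_eq_mul_tprod hq z
  have hqz' := tprod_one_sub_pow_mul_eq_mul_tprod hq (q * z)⁻¹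
  rw [show q * (q * z)⁻¹ = z⁻¹ by field_simp] at hqz'
  rw [phi_eq_mul_tprod_mul_tprod hq, phi_eq_mul_tprod_mul_tprod hq, hz', hqz']
  field_simp
  ring

lemma del_zero_left (x y : ℂ) : del 0 x y = (x * y - 1) / ((x - 1) * (y - 1)) := by
  simp [del, phi_zero_left]

lemma continuousAt_del {x y : ℂ} (hx : x ≠ 1) (hy : y ≠ 1) :
    ContinuousAt (fun q ↦ del q x y) 0 := by
  have hE : ContinuousAt (fun q : ℂ ↦ ∏' n : ℕ, (1 - q ^ (n + 1)) ^ 2) 0 := by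
    refine ((continuousAt_tprod_one_sub_pow_mul 1).pow 2).congr ?_
    filter_upwards [Metric.ball_mem_nhds (0 : ℂ) one_pos] with q hq
    simpa using ((multipliable_one_sub_pow_mul (mem_ball_zero_iff.mp hq) 1).tprod_pow 2).symm
  exact (hE.mul (continuousAt_phi _)).div ((continuousAt_phi x).mul (continuousAt_phi y))
    (by simp [phi_zero_left, sub_ne_zero, hx, hy])

lemma del_mul_right {q x y : ℂ} (hq : ‖q‖ < 1) (hq0 : q ≠ 0) (hx : x ≠ 0) (hy : y ≠ 0) :
    del q x (q * y) = x⁻¹ * del q x y := by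
  rw [del, del, mul_left_comm x q y, phi_mul_left hq hq0 (mul_ne_zero hx hy),
    phi_mul_left hq hq0 hy]
  field_simp

lemma apply_zpow_mul {G₀ M₀ : Type*} [CommGroupWithZero G₀] [CommGroupWithZero M₀]
    {f : G₀ → M₀} {c : G₀} {a : M₀} (hc : c ≠ 0) (ha : a ≠ 0)
    (h : ∀ w ≠ 0, f (c * w) = a * f w) (m : ℤ) {w : G₀} (hw : w ≠ 0) :
    f (c ^ m * w) = a ^ m * f w := by
  induction m using Int.induction_on with
  | zero => simp
  | succ k ih =>
    rw [show c ^ ((k : ℤ) + 1) * w = c * (c ^ (k : ℤ) * w) by rw [zpow_add_one₀ hc]; ac_rfl,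
      h _ (mul_ne_zero (zpow_ne_zero _ hc) hw), ih, zpow_add_one₀ ha]
    ac_rfl
  | pred k ih =>
    have hstep := h (c ^ (-(k : ℤ) - 1) * w) (mul_ne_zero (zpow_ne_zero _ hc) hw)
    rw [show c * (c ^ (-(k : ℤ) - 1) * w) = c ^ (-(k : ℤ)) * w by
      rw [zpow_sub_one₀ hc, mul_assoc, mul_left_comm, mul_inv_cancel_left₀ hc], ih] at hstep
    rw [zpow_sub_one₀ ha, mul_comm (a ^ _) a⁻¹, mul_assoc, hstep, inv_mul_cancel_left₀ ha]

lemma del_zpow_mul_right {q x y : ℂ} (hq : ‖q‖ < 1) (hq0 : q ≠ 0) (hx : x ≠ 0) (hy : y ≠ 0)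
    (m : ℤ) : del q x (q ^ m * y) = x ^ (-m) * del q x y := by
  rw [← inv_zpow']
  exact apply_zpow_mul hq0 (inv_ne_zero hx) (fun w hw ↦ del_mul_right hq hq0 hx hw) m hy

theorem stmt_11_general (x y : ℂ) (hx0 : x ≠ 0) (hy0 : y ≠ 0)
    (hx1 : x ≠ 1) (hy1 : y ≠ 1) (m : ℤ) :
    Filter.Tendsto
      (fun q : ℝ => del (q : ℂ) x ((q : ℂ) ^ (-m) * y))
      (nhdsWithin 0 (Set.Ioo (0 : ℝ) 1))
      (nhds (x ^ m * (x * y - 1) / ((x - 1) * (y - 1)))) := by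
  have hofReal : Tendsto (fun q : ℝ ↦ (q : ℂ)) (𝓝[Set.Ioo 0 1] 0) (𝓝 0) :=
    (Complex.continuous_ofReal.tendsto' 0 0 Complex.ofReal_zero).mono_left nhdsWithin_le_nhds
  have hlim := ((continuousAt_del hx1 hy1).tendsto.comp hofReal).const_mul (x ^ m)
  rw [del_zero_left, ← mul_div_assoc] at hlim
  refine hlim.congr' ?_
  filter_upwards [self_mem_nhdsWithin] with q ⟨hq0, hq1⟩
  have hq : ‖(q : ℂ)‖ < 1 := by rwa [Complex.norm_real, Real.norm_of_nonneg hq0.le]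
  rw [Function.comp_apply, del_zpow_mul_right hq (by exact_mod_cast hq0.ne') hx0 hy0, neg_neg]

theorem stmt_11 (x y : ℂ) (hx0 : x ≠ 0) (hy0 : y ≠ 0)
    (hx1 : x ≠ 1) (hy1 : y ≠ 1) (hxy : x * y ≠ 1) (m : ℤ) :
    Filter.Tendsto
      (fun q : ℝ => del (q : ℂ) x ((q : ℂ) ^ (-m) * y))
      (nhdsWithin 0 (Set.Ioo (0 : ℝ) 1))
      (nhds (x ^ m * (x * y - 1) / ((x - 1) * (y - 1)))) :=
  stmt_11_general x y hx0 hy0 hx1 hy1 m
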